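/- Jacobi triple product identity: for complex q, z with |q|<1 and z ≠ 0, ∑_{k=-∞}^∞ (-1)^k q^{k(k-1)/2} z^k = (q;q)_∞ (z;q)_∞ (q/z;q)_∞. -/

import Mathlib

open Filter Topology

/-- The infinite q-shifted factorial `(a;q)_∞ = ∏_{j≥0} (1 - a q^j)`. -/
noncomputable def qPinf (a q : ℂ) : ℂ := ∏' j : ℕ, (1 - a * q ^ j)

/-- The q-shifted factorial with integer index: `(a;q)_k = (a;q)_∞ / (a q^k;q)_∞`. -/
noncomputable def qPint (a q : ℂ) (k : ℤ) : ℂ := qPinf a q / qPinf (a * q ^ k) q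

/-- The finite q-shifted factorial `(a;q)_n = ∏_{j=0}^{n-1} (1 - a q^j)`. -/
noncomputable def qPfin (a q : ℂ) (n : ℕ) : ℂ := ∏ j ∈ Finset.range n, (1 - a * q ^ j)

/-- Gauss binomial coefficients times q-power, defined by recurrence. -/
noncomputable def gc (q : ℂ) : ℕ → ℤ → ℂ
  | 0, k => if k = 0 then 1 else 0
  | (N+1), k => gc q N k + q ^ N * gc q N (k - 1)

lemma gc_support (q : ℂ) : ∀ (N : ℕ) (k : ℤ), (k < 0 ∨ (N : ℤ) < k) → gc q N k = 0 := by
  intro N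
  induction N with
  | zero => intro k hk; simp only [gc]; rw [if_neg]; omega
  | succ N ih =>
    intro k hk
    simp only [gc]
    rw [ih k (by omega), ih (k - 1) (by omega)]
    ring

lemma gauss (q : ℂ) : ∀ (N : ℕ) (t : ℂ),
    ∏ j ∈ Finset.range N, (1 + t * q ^ j)
      = ∑ k ∈ Finset.range (N + 1), gc q N (k : ℤ) * t ^ k := by
  intro N
  induction N with
  | zero => intro t; simp [gc]
  | succ N ih =>
    intro t
    rw [Finset.prod_range_succ, ih]
    have h1 : ∑ k ∈ Finset.range (N + 2), gc q (N+1) (k : ℤ) * t ^ k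
        = ∑ k ∈ Finset.range (N + 2), (gc q N (k : ℤ) * t ^ k
            + q ^ N * (gc q N ((k : ℤ) - 1) * t ^ k)) := by
      refine Finset.sum_congr rfl fun k _ => ?_
      simp only [gc]; ring
    rw [h1, Finset.sum_add_distrib]
    have h2 : ∑ k ∈ Finset.range (N + 2), gc q N (k : ℤ) * t ^ k
        = ∑ k ∈ Finset.range (N + 1), gc q N (k : ℤ) * t ^ k := by
      rw [Finset.sum_range_succ, gc_support q N (N+1 : ℕ) (by omega)]
      simp
    have h3 : ∑ k ∈ Finset.range (N + 2), q ^ N * (gc q N ((k : ℤ) - 1) * t ^ k)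
        = q ^ N * t * ∑ k ∈ Finset.range (N + 1), gc q N (k : ℤ) * t ^ k := by
      rw [Finset.sum_range_succ']
      have h4 : ∀ k : ℕ, ((k : ℤ) + 1 - 1) = (k : ℤ) := by intro k; ring
      rw [Finset.mul_sum]
      simp only [Nat.cast_add, Nat.cast_one, h4, Nat.cast_zero]
      rw [gc_support q N (0 - 1) (by omega)]
      simp only [mul_zero, zero_mul, pow_zero, add_zero]
      refine Finset.sum_congr rfl fun k _ => ?_
      rw [pow_succ]
      ring
    rw [h2, h3]
    ring

lemma qPfin_succ (a q : ℂ) (n : ℕ) :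
    qPfin a q (n + 1) = qPfin a q n * (1 - a * q ^ n) := Finset.prod_range_succ _ n

lemma one_sub_q_pow_ne (q : ℂ) (hq : ‖q‖ < 1) (j : ℕ) : 1 - q * q ^ j ≠ 0 := by
  have h : ‖q * q ^ j‖ < 1 := by
    rw [norm_mul, norm_pow]
    calc ‖q‖ * ‖q‖ ^ j ≤ ‖q‖ * 1 := by
          refine mul_le_mul_of_nonneg_left ?_ (norm_nonneg q)
          exact pow_le_one₀ (norm_nonneg q) hq.le
      _ < 1 := by simpa using hq
  intro h0
  have : q * q ^ j = 1 := by linear_combination -h0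
  rw [this, norm_one] at h
  exact lt_irrefl _ h

lemma qPfin_q_ne (q : ℂ) (hq : ‖q‖ < 1) (n : ℕ) : qPfin q q n ≠ 0 :=
  Finset.prod_ne_zero_iff.2 fun j _ => one_sub_q_pow_ne q hq j

lemma choose_two_succ (k : ℕ) : (k + 1).choose 2 = k.choose 2 + k := by
  rw [Nat.choose_succ_succ, Nat.choose_one_right, add_comm]

lemma gc_closed (q : ℂ) (hq : ‖q‖ < 1) : ∀ (N k : ℕ), k ≤ N →
    gc q N (k : ℤ) = q ^ (k.choose 2) * qPfin q q N / (qPfin q q k * qPfin q q (N - k)) := by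
  intro N
  induction N with
  | zero =>
    intro k hk
    interval_cases k
    simp [gc, qPfin]
  | succ N ih =>
    intro k hk
    have hne := qPfin_q_ne q hq
    rcases Nat.eq_or_lt_of_le hk with hkN | hlt
    · -- k = N + 1
      subst hkN
      simp only [gc]
      rw [gc_support q N (N + 1 : ℕ) (by push_cast; omega)]
      have : ((N : ℤ) + 1 - 1) = (N : ℤ) := by ring
      push_cast
      rw [this, ih N le_rfl]
      have h0 : qPfin q q 0 = 1 := by simp [qPfin]
      rw [Nat.sub_self, choose_two_succ, h0, pow_add]
      field_simp [hne N, hne (N+1)]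
      ring
    · have hkN : k ≤ N := by omega
      rcases Nat.eq_zero_or_pos k with hk0 | hkpos
      · subst hk0
        have h00 := ih 0 (Nat.zero_le _)
        simp only [Nat.cast_zero, Nat.sub_zero] at h00 ⊢
        simp only [gc, Nat.cast_zero, zero_sub]
        rw [gc_support q N (-1) (by omega), mul_zero, add_zero, h00]
        have h0 : qPfin q q 0 = 1 := by simp [qPfin]
        rw [h0, one_mul, one_mul, mul_div_assoc, mul_div_assoc,
          div_self (hne N), div_self (hne (N+1))]
      · obtain ⟨j, rfl⟩ : ∃ j, k = j + 1 := ⟨k - 1, by omega⟩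
        obtain ⟨m, rfl⟩ : ∃ m, N = j + 1 + m := ⟨N - (j+1), by omega⟩
        simp only [gc]
        have hc1 : ((j : ℤ) + 1 - 1) = (j : ℤ) := by ring
        push_cast
        have i1 := ih (j+1) (by omega)
        push_cast at i1
        have i2 := ih j (by omega)
        have e1 : j + 1 + m - (j + 1) = m := by omega
        have e2 : j + 1 + m - j = m + 1 := by omega
        rw [e1] at i1
        rw [e2] at i2
        rw [hc1, i1, i2, choose_two_succ, e2]
        have s1 : qPfin q q (j + 1 + m + 1) = qPfin q q (j + 1 + m) * (1 - q * q ^ (j + 1 + m)) :=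
          qPfin_succ q q _
        have s2 : qPfin q q (j + 1) = qPfin q q j * (1 - q * q ^ j) := qPfin_succ q q j
        have s3 : qPfin q q (m + 1) = qPfin q q m * (1 - q * q ^ m) := qPfin_succ q q m
        rw [s1, s2, s3, pow_add]
        have n1 := hne j
        have n2 := hne m
        have n3 := one_sub_q_pow_ne q hq j
        have n4 := one_sub_q_pow_ne q hq m
        have n5 := one_sub_q_pow_ne q hq (j + 1 + m)
        have n6 : 1 - q ^ j * q ≠ 0 := by rwa [mul_comm (q ^ j)]
        field_simp
        ring

lemma int_half_mul (m : ℤ) : 2 * (m * (m - 1) / 2) = m * (m - 1) := by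
  refine Int.mul_ediv_cancel' ?_
  have h : Even ((m - 1) * m) := by simpa using Int.even_mul_succ_self (m - 1)
  rw [mul_comm] at h
  exact h.two_dvd

lemma choose_two_doubling (k : ℕ) : 2 * ((k.choose 2 : ℕ) : ℤ) = (k : ℤ) * ((k : ℤ) - 1) := by
  induction k with
  | zero => simp
  | succ j ih =>
    rw [choose_two_succ]
    push_cast
    push_cast at ih
    linear_combination ih

lemma sum_range_doubling (n : ℕ) :
    2 * ((∑ j ∈ Finset.range n, (j + 1) : ℕ) : ℤ) = (n : ℤ) * ((n : ℤ) + 1) := by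
  induction n with
  | zero => simp
  | succ m ih =>
    rw [Finset.sum_range_succ]
    push_cast
    push_cast at ih
    linear_combination ih

noncomputable def Bq (q : ℂ) (n : ℕ) (l : ℤ) : ℂ :=
  qPfin q q (2 * n) / (qPfin q q (n + l).toNat * qPfin q q (n - l).toNat)

lemma finite_jtp (q z : ℂ) (hq : ‖q‖ < 1) (hq0 : q ≠ 0) (hz : z ≠ 0) (n : ℕ) :
    qPfin z q n * qPfin (q / z) q n
      = ∑ l ∈ Finset.Icc (-(n : ℤ)) (n : ℤ),
          (-1 : ℂ) ^ l * q ^ (l * (l - 1) / 2) * z ^ l * Bq q n l := by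
  have hqpow : ∀ m : ℕ, q ^ m ≠ 0 := fun m => pow_ne_zero m hq0
  set S : ℕ := ∑ j ∈ Finset.range n, (j + 1) with hS
  -- the auxiliary product
  have hP : ∏ j ∈ Finset.range n, (-(z / q ^ (j + 1)))
      = (-1 : ℂ) ^ n * z ^ n * (q ^ S)⁻¹ := by
    calc ∏ j ∈ Finset.range n, (-(z / q ^ (j + 1)))
        = ∏ j ∈ Finset.range n, ((-1) * z * (q ^ (j + 1))⁻¹) := by
          refine Finset.prod_congr rfl fun j _ => ?_
          field_simp
      _ = ((-1 : ℂ) ^ n * z ^ n) * (∏ j ∈ Finset.range n, q ^ (j + 1))⁻¹ := by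
          rw [Finset.prod_mul_distrib, Finset.prod_mul_distrib, Finset.prod_const,
            Finset.prod_const, ← Finset.prod_inv_distrib]
          simp [Finset.card_range]
      _ = (-1 : ℂ) ^ n * z ^ n * (q ^ S)⁻¹ := by
          rw [Finset.prod_pow_eq_pow_sum, hS]
  have hPne : ((-1 : ℂ) ^ n * z ^ n * (q ^ S)⁻¹) ≠ 0 := by
    apply mul_ne_zero (mul_ne_zero _ _)
    · exact inv_ne_zero (hqpow S)
    · exact pow_ne_zero n (by norm_num)
    · exact pow_ne_zero n hz
  -- split the Gauss product
  have hG := gauss q (2 * n) (-(z / q ^ n))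
  have hsplit : ∏ j ∈ Finset.range (2 * n), (1 + (-(z / q ^ n)) * q ^ j)
      = (((-1 : ℂ) ^ n * z ^ n * (q ^ S)⁻¹) * qPfin (q / z) q n) * qPfin z q n := by
    rw [two_mul, Finset.prod_range_add]
    have h2 : ∏ j ∈ Finset.range n, (1 + (-(z / q ^ n)) * q ^ (n + j)) = qPfin z q n := by
      refine Finset.prod_congr rfl fun j _ => ?_
      rw [pow_add]
      field_simp
      ring
    have h1 : ∏ j ∈ Finset.range n, (1 + (-(z / q ^ n)) * q ^ j)
        = ((-1 : ℂ) ^ n * z ^ n * (q ^ S)⁻¹) * qPfin (q / z) q n := by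
      rw [← Finset.prod_range_reflect]
      have h3 : ∀ j ∈ Finset.range n, (1 + (-(z / q ^ n)) * q ^ (n - 1 - j))
          = (-(z / q ^ (j + 1))) * (1 - (q / z) * q ^ j) := by
        intro j hj
        have hjn : j < n := Finset.mem_range.1 hj
        have hsum : n - 1 - j + (j + 1) = n := by omega
        have hqn : q ^ n = q ^ (n - 1 - j) * q ^ (j + 1) := by rw [← pow_add, hsum]
        rw [hqn]
        field_simp
        ring
      rw [Finset.prod_congr rfl h3, Finset.prod_mul_distrib, hP, qPfin]
    rw [h1, h2]
  rw [hsplit] at hG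
  -- solve for the product
  have hmain : qPfin z q n * qPfin (q / z) q n
      = ∑ k ∈ Finset.range (2 * n + 1),
          ((-1 : ℂ) ^ n * z ^ n * (q ^ S)⁻¹)⁻¹ * (gc q (2 * n) (k : ℤ) * (-(z / q ^ n)) ^ k) := by
    rw [← Finset.mul_sum, ← hG]
    field_simp
    try ring
  rw [hmain]
  -- reindex the target sum
  have himg : Finset.Icc (-(n : ℤ)) (n : ℤ)
      = Finset.image (fun k : ℕ => (k : ℤ) - n) (Finset.range (2 * n + 1)) := by
    ext x
    simp only [Finset.mem_Icc, Finset.mem_image, Finset.mem_range]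
    constructor
    · intro hx; exact ⟨(x + n).toNat, by omega, by omega⟩
    · rintro ⟨k, hk, rfl⟩; omega
  rw [himg, Finset.sum_image (fun a _ b _ h => by omega)]
  refine Finset.sum_congr rfl fun k hk => ?_
  have hk2n : k ≤ 2 * n := by simpa using Nat.lt_succ_iff.1 (Finset.mem_range.1 hk)
  -- compute Bq
  have t1 : ((n : ℤ) + ((k : ℤ) - n)).toNat = k := by omega
  have t2 : ((n : ℤ) - ((k : ℤ) - n)).toNat = 2 * n - k := by omega
  rw [Bq, t1, t2, gc_closed q hq (2 * n) k hk2n]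
  -- zpow to pow conversions
  have hneg : (-1 : ℂ) ^ ((k : ℤ) - n) = (-1 : ℂ) ^ k * ((-1 : ℂ) ^ n)⁻¹ := by
    rw [zpow_sub₀ (by norm_num : (-1 : ℂ) ≠ 0), zpow_natCast, zpow_natCast, div_eq_mul_inv]
  have hzz : z ^ ((k : ℤ) - n) = z ^ k * (z ^ n)⁻¹ := by
    rw [zpow_sub₀ hz, zpow_natCast, zpow_natCast, div_eq_mul_inv]
  have hexp : ((k : ℤ) - n) * (((k : ℤ) - n) - 1) / 2
      = (k.choose 2 : ℤ) + (S : ℤ) - ((n * k : ℕ) : ℤ) := by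
    have d1 := int_half_mul ((k : ℤ) - n)
    have d2 := choose_two_doubling k
    have d3 := sum_range_doubling n
    rw [← hS] at d3
    refine mul_left_cancel₀ (by norm_num : (2 : ℤ) ≠ 0) ?_
    rw [d1]
    push_cast
    linear_combination -d2 - d3
  have hqq : q ^ (((k : ℤ) - n) * (((k : ℤ) - n) - 1) / 2)
      = q ^ (k.choose 2) * q ^ S * (q ^ (n * k))⁻¹ := by
    rw [hexp, zpow_sub₀ hq0, zpow_add₀ hq0, zpow_natCast, zpow_natCast, zpow_natCast,
      div_eq_mul_inv]
  rw [hneg, hzz, hqq]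
  have hnpk : (-(z / q ^ n)) ^ k = (-1 : ℂ) ^ k * z ^ k * (q ^ (n * k))⁻¹ := by
    rw [neg_eq_neg_one_mul, mul_pow, div_pow, ← pow_mul, div_eq_mul_inv]
    ring
  rw [hnpk]
  have hne1 := qPfin_q_ne q hq k
  have hne2 := qPfin_q_ne q hq (2 * n - k)
  have hne3 : ((-1 : ℂ)) ^ n ≠ 0 := pow_ne_zero n (by norm_num)
  field_simp

lemma tendsto_qPfin (a q : ℂ) (hq : ‖q‖ < 1) :
    Tendsto (fun n => qPfin a q n) atTop (𝓝 (qPinf a q)) := by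
  by_cases hzero : ∃ j : ℕ, 1 - a * q ^ j = 0
  · obtain ⟨j0, hj0⟩ := hzero
    have hprod : HasProd (fun j : ℕ => 1 - a * q ^ j) 0 := by
      rw [HasProd]
      have he : ∀ᶠ s : Finset ℕ in atTop, (∏ i ∈ s, (1 - a * q ^ i)) = 0 := by
        filter_upwards [eventually_ge_atTop ({j0} : Finset ℕ)] with s hs
        exact Finset.prod_eq_zero (hs (Finset.mem_singleton_self j0)) hj0
      exact Tendsto.congr' (he.mono fun s hs => hs.symm) tendsto_const_nhds
    have h0 : qPinf a q = 0 := hprod.tprod_eq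
    rw [h0]
    have he2 : ∀ᶠ n : ℕ in atTop, qPfin a q n = 0 := by
      filter_upwards [eventually_ge_atTop (j0 + 1)] with n hn
      exact Finset.prod_eq_zero (Finset.mem_range.2 (by omega)) hj0
    exact Tendsto.congr' (he2.mono fun n hn => hn.symm) tendsto_const_nhds
  · push_neg at hzero
    have hmul : Multipliable (fun j : ℕ => 1 - a * q ^ j) := by
      refine Complex.multipliable_of_summable_log (f := fun j => 1 - a * q ^ j) ?_
      refine Summable.of_norm_bounded_eventually_nat (g := fun j => 3 / 2 * (‖a‖ * ‖q‖ ^ j))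
        (((summable_geometric_of_lt_one (norm_nonneg q) hq).mul_left ‖a‖).mul_left _) ?_
      have h0 : Tendsto (fun j : ℕ => ‖a‖ * ‖q‖ ^ j) atTop (𝓝 (‖a‖ * 0)) :=
        (tendsto_pow_atTop_nhds_zero_of_lt_one (norm_nonneg q) hq).const_mul ‖a‖
      rw [mul_zero] at h0
      filter_upwards [h0.eventually_lt_const (by norm_num : (0 : ℝ) < 1 / 2)] with j hj
      have hna : ‖-(a * q ^ j)‖ ≤ 1 / 2 := by
        rw [norm_neg, norm_mul, norm_pow]; exact hj.le
      have := Complex.norm_log_one_add_half_le_self hna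
      rw [show (1 : ℂ) + -(a * q ^ j) = 1 - a * q ^ j by ring] at this
      calc ‖Complex.log (1 - a * q ^ j)‖ ≤ 3 / 2 * ‖-(a * q ^ j)‖ := this
        _ = 3 / 2 * (‖a‖ * ‖q‖ ^ j) := by rw [norm_neg, norm_mul, norm_pow]
    simpa [qPfin, qPinf] using hmul.hasProd.tendsto_prod_nat

lemma exp_aux {x c : ℝ} (hx0 : 0 ≤ x) (hxc : x ≤ c) (hc : c < 1) :
    Real.exp (-(x / (1 - c))) ≤ 1 - x := by
  have hc0 : 0 < 1 - c := by linarith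
  have hx1 : 0 < 1 - x := by linarith
  set y := x / (1 - c) with hy
  have hy0 : 0 ≤ y := div_nonneg hx0 hc0.le
  have hyx : y * (1 - c) = x := by rw [hy]; field_simp
  have hE := Real.add_one_le_exp y
  have key : 1 ≤ (1 - x) * Real.exp y := by
    nlinarith [mul_le_mul_of_nonneg_left hE hx1.le, mul_nonneg hy0 (sub_nonneg.2 hxc)]
  rw [Real.exp_neg]
  calc (Real.exp y)⁻¹ = (Real.exp y)⁻¹ * 1 := by rw [mul_one]
    _ ≤ (Real.exp y)⁻¹ * ((1 - x) * Real.exp y) :=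
        mul_le_mul_of_nonneg_left key (inv_nonneg.2 (Real.exp_pos y).le)
    _ = 1 - x := by field_simp

lemma sum_pow_le (q : ℂ) (hq : ‖q‖ < 1) (m : ℕ) :
    ∑ j ∈ Finset.range m, ‖q‖ ^ (j + 1) ≤ ‖q‖ / (1 - ‖q‖) := by
  have h1 : ∑ j ∈ Finset.range m, ‖q‖ ^ (j + 1) = ‖q‖ * ∑ j ∈ Finset.range m, ‖q‖ ^ j := by
    rw [Finset.mul_sum]
    exact Finset.sum_congr rfl fun j _ => by rw [pow_succ']
  rw [h1, div_eq_mul_inv]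
  refine mul_le_mul_of_nonneg_left ?_ (norm_nonneg q)
  calc ∑ j ∈ Finset.range m, ‖q‖ ^ j
      ≤ ∑' j : ℕ, ‖q‖ ^ j := Summable.sum_le_tsum _ (fun i _ => pow_nonneg (norm_nonneg q) i)
        (summable_geometric_of_lt_one (norm_nonneg q) hq)
    _ = (1 - ‖q‖)⁻¹ := tsum_geometric_of_lt_one (norm_nonneg q) hq

lemma qPfin_q_norm_le (q : ℂ) (hq : ‖q‖ < 1) (m : ℕ) :
    ‖qPfin q q m‖ ≤ Real.exp (‖q‖ / (1 - ‖q‖)) := by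
  rw [qPfin, norm_prod]
  calc ∏ j ∈ Finset.range m, ‖1 - q * q ^ j‖
      ≤ ∏ j ∈ Finset.range m, Real.exp (‖q‖ ^ (j + 1)) := by
        refine Finset.prod_le_prod (fun j _ => norm_nonneg _) fun j _ => ?_
        calc ‖1 - q * q ^ j‖ ≤ ‖(1 : ℂ)‖ + ‖q * q ^ j‖ := norm_sub_le _ _
          _ = ‖q‖ ^ (j + 1) + 1 := by
              rw [norm_one, norm_mul, norm_pow, ← pow_succ']; ring
          _ ≤ Real.exp (‖q‖ ^ (j + 1)) := Real.add_one_le_exp _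
    _ = Real.exp (∑ j ∈ Finset.range m, ‖q‖ ^ (j + 1)) := (Real.exp_sum _ _).symm
    _ ≤ Real.exp (‖q‖ / (1 - ‖q‖)) := Real.exp_le_exp.2 (sum_pow_le q hq m)

lemma qPfin_q_norm_ge (q : ℂ) (hq : ‖q‖ < 1) (m : ℕ) :
    Real.exp (-(‖q‖ / ((1 - ‖q‖) * (1 - ‖q‖)))) ≤ ‖qPfin q q m‖ := by
  have hq0 := norm_nonneg q
  rw [qPfin, norm_prod]
  have hfac : ∀ j : ℕ, Real.exp (-(‖q‖ ^ (j + 1) / (1 - ‖q‖))) ≤ ‖1 - q * q ^ j‖ := by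
    intro j
    have h1 : ‖q‖ ^ (j + 1) ≤ ‖q‖ := by
      calc ‖q‖ ^ (j + 1) ≤ ‖q‖ ^ 1 := pow_le_pow_of_le_one hq0 hq.le (by omega)
        _ = ‖q‖ := pow_one _
    have h2 := exp_aux (pow_nonneg hq0 (j + 1)) h1 hq
    refine h2.trans ?_
    calc 1 - ‖q‖ ^ (j + 1) = ‖(1 : ℂ)‖ - ‖q * q ^ j‖ := by
          rw [norm_one, norm_mul, norm_pow, ← pow_succ']
      _ ≤ ‖1 - q * q ^ j‖ := norm_sub_norm_le _ _
  calc Real.exp (-(‖q‖ / ((1 - ‖q‖) * (1 - ‖q‖))))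
      ≤ Real.exp (∑ j ∈ Finset.range m, -(‖q‖ ^ (j + 1) / (1 - ‖q‖))) := by
        refine Real.exp_le_exp.2 ?_
        have hsum := sum_pow_le q hq m
        have h1c : 0 < 1 - ‖q‖ := by linarith
        have h2 : ∑ j ∈ Finset.range m, -(‖q‖ ^ (j + 1) / (1 - ‖q‖))
            = -((∑ j ∈ Finset.range m, ‖q‖ ^ (j + 1)) / (1 - ‖q‖)) := by
          rw [Finset.sum_neg_distrib, ← Finset.sum_div]
        rw [h2, ← div_div]
        exact neg_le_neg ((div_le_div_iff_of_pos_right h1c).2 hsum)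
    _ = ∏ j ∈ Finset.range m, Real.exp (-(‖q‖ ^ (j + 1) / (1 - ‖q‖))) := Real.exp_sum _ _
    _ ≤ ∏ j ∈ Finset.range m, ‖1 - q * q ^ j‖ :=
        Finset.prod_le_prod (fun j _ => (Real.exp_pos _).le) fun j _ => hfac j

lemma qPinf_q_norm_ge (q : ℂ) (hq : ‖q‖ < 1) :
    Real.exp (-(‖q‖ / ((1 - ‖q‖) * (1 - ‖q‖)))) ≤ ‖qPinf q q‖ :=
  ge_of_tendsto' (tendsto_qPfin q q hq).norm (fun m => qPfin_q_norm_ge q hq m)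

lemma qPinf_q_ne (q : ℂ) (hq : ‖q‖ < 1) : qPinf q q ≠ 0 := by
  intro h
  have := qPinf_q_norm_ge q hq
  rw [h, norm_zero] at this
  exact absurd this (not_le.2 (Real.exp_pos _))

lemma Bq_norm_le (q : ℂ) (hq : ‖q‖ < 1) (n : ℕ) (l : ℤ) :
    ‖Bq q n l‖ ≤ Real.exp (‖q‖ / (1 - ‖q‖))
      / (Real.exp (-(‖q‖ / ((1 - ‖q‖) * (1 - ‖q‖))))
          * Real.exp (-(‖q‖ / ((1 - ‖q‖) * (1 - ‖q‖))))) := by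
  rw [Bq, norm_div, norm_mul]
  refine div_le_div₀ (Real.exp_pos _).le (qPfin_q_norm_le q hq _)
    (mul_pos (Real.exp_pos _) (Real.exp_pos _)) ?_
  exact mul_le_mul (qPfin_q_norm_ge q hq _) (qPfin_q_norm_ge q hq _)
    (Real.exp_pos _).le (norm_nonneg _)

lemma Bq_tendsto (q : ℂ) (hq : ‖q‖ < 1) (l : ℤ) :
    Tendsto (fun n => Bq q n l) atTop (𝓝 (qPinf q q)⁻¹) := by
  have h1 : Tendsto (fun n : ℕ => qPfin q q (2 * n)) atTop (𝓝 (qPinf q q)) :=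
    (tendsto_qPfin q q hq).comp
      (tendsto_atTop_atTop.2 fun b => ⟨b, fun a ha => by omega⟩)
  have h2 : Tendsto (fun n : ℕ => qPfin q q ((n + l).toNat)) atTop (𝓝 (qPinf q q)) :=
    (tendsto_qPfin q q hq).comp
      (tendsto_atTop_atTop.2 fun b => ⟨b + l.natAbs, fun a ha => by omega⟩)
  have h3 : Tendsto (fun n : ℕ => qPfin q q ((n - l).toNat)) atTop (𝓝 (qPinf q q)) :=
    (tendsto_qPfin q q hq).comp
      (tendsto_atTop_atTop.2 fun b => ⟨b + l.natAbs, fun a ha => by omega⟩)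
  have h4 := h1.div (h2.mul h3) (mul_ne_zero (qPinf_q_ne q hq) (qPinf_q_ne q hq))
  have h5 : qPinf q q / (qPinf q q * qPinf q q) = (qPinf q q)⁻¹ := by
    field_simp
  rw [h5] at h4
  exact h4

lemma T_succ (q z : ℂ) (hq0 : q ≠ 0) (hz : z ≠ 0) (m : ℕ) :
    (-1 : ℂ) ^ ((m : ℤ) + 1) * q ^ (((m : ℤ) + 1) * (((m : ℤ) + 1) - 1) / 2) * z ^ ((m : ℤ) + 1)
      = (-(q ^ m * z))
        * ((-1 : ℂ) ^ (m : ℤ) * q ^ ((m : ℤ) * ((m : ℤ) - 1) / 2) * z ^ (m : ℤ)) := by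
  have e1 : ((m : ℤ) + 1) * (((m : ℤ) + 1) - 1) / 2 = (m : ℤ) * ((m : ℤ) - 1) / 2 + m := by
    refine mul_left_cancel₀ (by norm_num : (2 : ℤ) ≠ 0) ?_
    rw [int_half_mul, mul_add, int_half_mul]
    ring
  rw [e1, zpow_add₀ hq0, zpow_add₀ (by norm_num : (-1 : ℂ) ≠ 0), zpow_add₀ hz,
    zpow_natCast, zpow_one, zpow_one]
  try simp only [zpow_natCast]
  ring

lemma T_pred (q z : ℂ) (hq0 : q ≠ 0) (hz : z ≠ 0) (m : ℕ) :
    (-1 : ℂ) ^ (-(m : ℤ) - 1) * q ^ ((-(m : ℤ) - 1) * ((-(m : ℤ) - 1) - 1) / 2) * z ^ (-(m : ℤ) - 1)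
      = (-(q ^ (m + 1) * z⁻¹))
        * ((-1 : ℂ) ^ (-(m : ℤ)) * q ^ ((-(m : ℤ)) * ((-(m : ℤ)) - 1) / 2) * z ^ (-(m : ℤ))) := by
  have e1 : (-(m : ℤ) - 1) * ((-(m : ℤ) - 1) - 1) / 2
      = (-(m : ℤ)) * ((-(m : ℤ)) - 1) / 2 + ((m : ℤ) + 1) := by
    refine mul_left_cancel₀ (by norm_num : (2 : ℤ) ≠ 0) ?_
    rw [int_half_mul, mul_add, int_half_mul]
    ring
  have e2 : ((m : ℤ) + 1) = ((m + 1 : ℕ) : ℤ) := by push_cast; ring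
  rw [e1, e2, zpow_add₀ hq0, zpow_natCast,
    zpow_sub₀ (by norm_num : (-1 : ℂ) ≠ 0), zpow_sub₀ hz, zpow_one, zpow_one]
  try simp only [zpow_natCast]
  field_simp

lemma T_norm_summable (q z : ℂ) (hq : ‖q‖ < 1) (hq0 : q ≠ 0) (hz : z ≠ 0) :
    Summable (fun l : ℤ => ‖(-1 : ℂ) ^ l * q ^ (l * (l - 1) / 2) * z ^ l‖) := by
  apply Summable.of_nat_of_neg
  · apply summable_of_ratio_norm_eventually_le (by norm_num : (1 : ℝ) / 2 < 1)
    have h0 : Tendsto (fun m : ℕ => ‖q‖ ^ m * ‖z‖) atTop (𝓝 (0 * ‖z‖)) :=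
      (tendsto_pow_atTop_nhds_zero_of_lt_one (norm_nonneg q) hq).mul_const ‖z‖
    rw [zero_mul] at h0
    filter_upwards [h0.eventually_lt_const (by norm_num : (0 : ℝ) < 1 / 2)] with m hm
    have hc : ((m + 1 : ℕ) : ℤ) = (m : ℤ) + 1 := by push_cast; ring
    rw [norm_norm, norm_norm, hc, T_succ q z hq0 hz m, norm_mul, norm_neg, norm_mul, norm_pow]
    exact mul_le_mul_of_nonneg_right hm.le (norm_nonneg _)
  · apply summable_of_ratio_norm_eventually_le (by norm_num : (1 : ℝ) / 2 < 1)
    have h0 : Tendsto (fun m : ℕ => ‖q‖ ^ (m + 1) * ‖z‖⁻¹) atTop (𝓝 (0 * ‖z‖⁻¹)) := by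
      refine Tendsto.mul_const ‖z‖⁻¹ ?_
      exact (tendsto_pow_atTop_nhds_zero_of_lt_one (norm_nonneg q) hq).comp
        (tendsto_atTop_atTop.2 fun b => ⟨b, fun a ha => by omega⟩)
    rw [zero_mul] at h0
    filter_upwards [h0.eventually_lt_const (by norm_num : (0 : ℝ) < 1 / 2)] with m hm
    have hc : (-((m + 1 : ℕ) : ℤ)) = -(m : ℤ) - 1 := by push_cast; ring
    rw [norm_norm, norm_norm, hc, T_pred q z hq0 hz m, norm_mul, norm_neg, norm_mul, norm_pow,
      norm_inv]
    exact mul_le_mul_of_nonneg_right hm.le (norm_nonneg _)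

lemma qPinf_zero (a : ℂ) : qPinf a 0 = 1 - a := by
  rw [qPinf, tprod_eq_prod (s := ({0} : Finset ℕ)) ?h]
  · simp
  · intro b hb
    have hb0 : b ≠ 0 := by simpa using hb
    rw [zero_pow hb0, mul_zero, sub_zero]

theorem jacobi_triple_product (q z : ℂ) (hq : ‖q‖ < 1) (hz : z ≠ 0) :
    ∑' k : ℤ, (-1 : ℂ) ^ k * q ^ (k * (k - 1) / 2) * z ^ k
      = qPinf q q * qPinf z q * qPinf (q / z) q := by
  by_cases hq0 : q = 0
  · subst hq0
    rw [qPinf_zero, qPinf_zero, zero_div, qPinf_zero]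
    have hsum : ∑' k : ℤ, (-1 : ℂ) ^ k * (0 : ℂ) ^ (k * (k - 1) / 2) * z ^ k
        = ∑ k ∈ ({0, 1} : Finset ℤ), (-1 : ℂ) ^ k * (0 : ℂ) ^ (k * (k - 1) / 2) * z ^ k := by
      refine tsum_eq_sum fun k hk => ?_
      have hk01 : ¬(k = 0 ∨ k = 1) := by simpa using hk
      have h2 : 2 ≤ k * (k - 1) := by
        rcases lt_or_ge k 0 with h | h
        · nlinarith
        · have h2k : 2 ≤ k := by omega
          nlinarith
      have hne : k * (k - 1) / 2 ≠ 0 := by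
        have h1 : 1 ≤ k * (k - 1) / 2 := by
          rw [Int.le_ediv_iff_mul_le (by norm_num)]
          omega
        omega
      rw [zero_zpow _ hne, mul_zero, zero_mul]
    rw [hsum, Finset.sum_insert (by norm_num), Finset.sum_singleton]
    norm_num
    ring
  · set T : ℤ → ℂ := fun k => (-1 : ℂ) ^ k * q ^ (k * (k - 1) / 2) * z ^ k with hT
    have hTsum := T_norm_summable q z hq hq0 hz
    have hM0 : (0 : ℝ) ≤ Real.exp (‖q‖ / (1 - ‖q‖))
        / (Real.exp (-(‖q‖ / ((1 - ‖q‖) * (1 - ‖q‖))))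
            * Real.exp (-(‖q‖ / ((1 - ‖q‖) * (1 - ‖q‖))))) :=
      le_of_lt (div_pos (Real.exp_pos _) (mul_pos (Real.exp_pos _) (Real.exp_pos _)))
    set M : ℝ := Real.exp (‖q‖ / (1 - ‖q‖))
        / (Real.exp (-(‖q‖ / ((1 - ‖q‖) * (1 - ‖q‖))))
            * Real.exp (-(‖q‖ / ((1 - ‖q‖) * (1 - ‖q‖))))) with hMdef
    set f : ℕ → ℤ → ℂ :=
      fun n l => (if l ∈ Finset.Icc (-(n : ℤ)) (n : ℤ) then Bq q n l else 0) * T l with hf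
    have hbound : ∀ n : ℕ, ∀ l : ℤ, ‖f n l‖ ≤ M * ‖T l‖ := by
      intro n l
      rw [hf]
      dsimp only
      split_ifs with h
      · rw [norm_mul]
        exact mul_le_mul_of_nonneg_right (Bq_norm_le q hq n l) (norm_nonneg _)
      · rw [zero_mul, norm_zero]
        exact mul_nonneg hM0 (norm_nonneg _)
    have hlim : ∀ l : ℤ, Tendsto (fun n => f n l) atTop (𝓝 ((qPinf q q)⁻¹ * T l)) := by
      intro l
      refine Tendsto.congr' ?_ ((Bq_tendsto q hq l).mul_const (T l))
      filter_upwards [eventually_ge_atTop l.natAbs] with n hn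
      rw [hf]
      dsimp only
      rw [if_pos]
      simp only [Finset.mem_Icc]
      omega
    have hkey := tendsto_tsum_of_dominated_convergence (hTsum.mul_left M) hlim
      (Eventually.of_forall hbound)
    have heq : ∀ n : ℕ, ∑' l, f n l = qPfin z q n * qPfin (q / z) q n := by
      intro n
      rw [tsum_eq_sum (s := Finset.Icc (-(n : ℤ)) (n : ℤ)) ?_]
      · rw [finite_jtp q z hq hq0 hz n]
        refine Finset.sum_congr rfl fun l hl => ?_
        rw [hf]
        dsimp only
        rw [if_pos hl, hT]
        ring
      · intro l hl
        rw [hf]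
        dsimp only
        rw [if_neg hl, zero_mul]
    have h2 : Tendsto (fun n => qPfin z q n * qPfin (q / z) q n) atTop
        (𝓝 (∑' l, (qPinf q q)⁻¹ * T l)) := Tendsto.congr (fun n => heq n) hkey
    have h3 : Tendsto (fun n => qPfin z q n * qPfin (q / z) q n) atTop
        (𝓝 (qPinf z q * qPinf (q / z) q)) :=
      (tendsto_qPfin z q hq).mul (tendsto_qPfin (q / z) q hq)
    have h4 : ∑' l, (qPinf q q)⁻¹ * T l = qPinf z q * qPinf (q / z) q :=
      tendsto_nhds_unique h2 h3
    rw [tsum_mul_left, inv_mul_eq_iff_eq_mul₀ (qPinf_q_ne q hq)] at h4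
    exact h4.trans (mul_assoc _ _ _).symm
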